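/- arXiv:2106.15685 — 3 statements merged into one kernel-verified Lean document; each statement's English description precedes it below -/
import Mathlib

section
/- Let R ≥ 1 and let a ≥ 2 be an even integer. Let λ_1, …, λ_R be positive reals. Suppose v : [0,∞) → ℝ^R is a solution of the loading dynamics dv_i/dt = λ_i v_i^a − v_i ∑_{j=1}^R λ_j v_j^{a+1} whose initial condition satisfies ∑_{j=1}^R v_j(0)^2 < 1 and v_k(0) < 0 for every k ∈ {1,…,R}. Then v(t) → 0 as t → ∞. -/
/-!
Write `S(u) = ∑ λ_j u_j^(a+1)` and `ρ = ∑ v_j²`. Each coordinate solves the linear equation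
`v_i' = (λ_i v_i^(a-1) - S(v)) v_i`, and `ρ - 1` solves `(ρ - 1)' = -2 S(v) (ρ - 1)`; solutions
of linear equations cannot change sign, so the loadings stay negative and `ρ < 1`. As `a + 1` is
odd, `S(v) ≤ 0`, hence `ρ` is nonincreasing. If `ρ` stayed above some `ε > 0`, the trajectory
would stay in a compact set on which `S` is bounded away from `0`, forcing `ρ` to decrease at a
uniform rate and become negative.
-/

open Filter Topology Set

lemma eqOn_zero_of_hasDerivAt_mul_self {y g : ℝ → ℝ} {a b : ℝ}
    (hg : ContinuousOn g (Icc a b)) (hy : ∀ t ∈ Icc a b, HasDerivAt y (g t * y t) t)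
    (hb : y b = 0) : EqOn y 0 (Icc a b) := by
  obtain ⟨M, hM⟩ := isCompact_Icc.exists_bound_of_continuousOn hg
  have hlip : ∀ t ∈ Ioc a b, LipschitzOnWith (Real.toNNReal M) (g t * ·) univ := fun t ht =>
    ((lipschitzWith_smul (g t)).weaken (by
      rw [← NNReal.coe_le_coe, Real.coe_toNNReal']
      exact (hM t (Ioc_subset_Icc_self ht)).trans (le_max_left _ _))).lipschitzOnWith
  have hyc : ContinuousOn y (Icc a b) := fun t ht => (hy t ht).continuousAt.continuousWithinAt
  exact ODE_solution_unique_of_mem_Icc_left hlip hyc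
    (fun t ht => (hy t (Ioc_subset_Icc_self ht)).hasDerivWithinAt) (fun _ _ => mem_univ _)
    continuousOn_const
    (fun t _ => (hasDerivWithinAt_const t (Iic t) (0 : ℝ)).congr_deriv (by simp))
    (fun _ _ => mem_univ _) hb

lemma neg_of_hasDerivAt_mul_self {y g : ℝ → ℝ} {t₀ : ℝ} (hg : ContinuousOn g (Ici t₀))
    (hy : ∀ t ≥ t₀, HasDerivAt y (g t * y t) t) (h₀ : y t₀ < 0) : ∀ t ≥ t₀, y t < 0 := by
  intro t ht
  by_contra! hyt
  have hyc : ContinuousOn y (Icc t₀ t) := fun s hs => (hy s hs.1).continuousAt.continuousWithinAt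
  obtain ⟨s, hs, hys⟩ := intermediate_value_Icc ht hyc ⟨h₀.le, hyt⟩
  have := eqOn_zero_of_hasDerivAt_mul_self (hg.mono Icc_subset_Ici_self)
    (fun r hr => hy r hr.1) hys (left_mem_Icc.2 hs.1)
  simp [this] at h₀

lemma le_sub_mul_of_hasDerivAt_le_neg {f f' : ℝ → ℝ} {K : ℝ}
    (hf : ∀ t ≥ 0, HasDerivAt f (f' t) t) (hf' : ∀ t > 0, f' t ≤ -K) {t : ℝ} (ht : 0 ≤ t) :
    f t ≤ f 0 - K * t := by
  have hint : ∀ s ∈ interior (Ici (0 : ℝ)), 0 < s := fun s hs => by simpa using hs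
  have := (convex_Ici 0).image_sub_le_mul_sub_of_deriv_le
    (fun s hs => (hf s hs).continuousAt.continuousWithinAt)
    (fun s hs => (hf s (hint s hs).le).differentiableAt.differentiableWithinAt)
    (fun s hs => (hf s (hint s hs).le).deriv ▸ hf' s (hint s hs)) 0 self_mem_Ici t ht ht
  linarith

lemma tendsto_zero_of_tendsto_sum_sq {α ι : Type*} [Fintype ι] {l : Filter α} {f : α → ι → ℝ}
    (h : Tendsto (fun t => ∑ j, f t j ^ 2) l (𝓝 0)) : Tendsto f l (𝓝 0) := by
  refine tendsto_pi_nhds.2 fun i => ?_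
  have hsqrt : Tendsto (fun t => √(∑ j, f t j ^ 2)) l (𝓝 0) := by
    simpa using h.sqrt
  exact squeeze_zero_norm (fun t => Real.abs_le_sqrt
    (Finset.single_le_sum (fun j _ => sq_nonneg (f t j)) (Finset.mem_univ i))) hsqrt

section Hebbian

variable {ι : Type*} [Fintype ι]

def hebbianDrive (lam : ι → ℝ) (a : ℕ) (u : ι → ℝ) : ℝ := ∑ j, lam j * u j ^ (a + 1)

variable {lam : ι → ℝ} {a : ℕ}

lemma continuous_hebbianDrive : Continuous (hebbianDrive lam a) := by
  unfold hebbianDrive; fun_prop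

lemma hebbianDrive_nonpos (ha : Even a) (hlam : ∀ j, 0 ≤ lam j) {u : ι → ℝ} (hu : u ≤ 0) :
    hebbianDrive lam a u ≤ 0 :=
  Finset.sum_nonpos fun j _ =>
    mul_nonpos_of_nonneg_of_nonpos (hlam j) (ha.add_one.pow_nonpos (hu j))

lemma hebbianDrive_neg (ha : Even a) (hlam : ∀ j, 0 < lam j) {u : ι → ℝ} (hu : u ≤ 0)
    (hne : u ≠ 0) : hebbianDrive lam a u < 0 := by
  obtain ⟨j, hj⟩ := Function.ne_iff.1 hne
  have hterm : lam j * u j ^ (a + 1) < 0 :=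
    mul_neg_of_pos_of_neg (hlam j) (ha.add_one.pow_neg ((hu j).lt_of_ne hj))
  simpa [hebbianDrive] using Finset.sum_lt_sum (fun k _ => mul_nonpos_of_nonneg_of_nonpos
    (hlam k).le (ha.add_one.pow_nonpos (hu k))) ⟨j, Finset.mem_univ j, hterm⟩

lemma exists_pos_forall_hebbianDrive_le (ha : Even a) (hlam : ∀ j, 0 < lam j) {ε B : ℝ}
    (hε : 0 < ε) : ∃ c > 0, ∀ u : ι → ℝ, u ≤ 0 → ε ≤ ∑ j, u j ^ 2 → ∑ j, u j ^ 2 ≤ B →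
      hebbianDrive lam a u ≤ -c := by
  set K := {u : ι → ℝ | u ≤ 0 ∧ ε ≤ ∑ j, u j ^ 2 ∧ ∑ j, u j ^ 2 ≤ B}
  have hρ : Continuous fun u : ι → ℝ => ∑ j, u j ^ 2 := by fun_prop
  have hclosed : IsClosed K :=
    (isClosed_le continuous_id continuous_const).inter
      ((isClosed_le continuous_const hρ).inter (isClosed_le hρ continuous_const))
  have hbdd : Bornology.IsBounded K := by
    refine (Metric.isBounded_closedBall (x := (0 : ι → ℝ)) (r := √B)).subset fun u hu => ?_
    rw [mem_closedBall_zero_iff, pi_norm_le_iff_of_nonneg (Real.sqrt_nonneg B)]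
    exact fun j => Real.abs_le_sqrt
      ((Finset.single_le_sum (fun k _ => sq_nonneg (u k)) (Finset.mem_univ j)).trans hu.2.2)
  have hneg : ∀ u ∈ K, 0 < -hebbianDrive lam a u := fun u hu => by
    refine neg_pos.2 (hebbianDrive_neg ha hlam hu.1 fun h0 => ?_)
    have := hu.2.1
    simp [h0] at this
    linarith
  obtain ⟨c, hc, hcK⟩ := (Metric.isCompact_of_isClosed_isBounded hclosed hbdd).exists_forall_le'
    continuous_hebbianDrive.neg.continuousOn hneg
  exact ⟨c, hc, fun u hu h₁ h₂ => le_neg.1 (hcK u ⟨hu, h₁, h₂⟩)⟩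

end Hebbian

section LoadingDynamics

variable {ι : Type*} [Fintype ι] {lam : ι → ℝ} {a : ℕ} {v : ℝ → ι → ℝ}

def IsLoadingSolution (lam : ι → ℝ) (a : ℕ) (v : ℝ → ι → ℝ) : Prop :=
  ∀ t ≥ (0 : ℝ), ∀ i, HasDerivAt (fun s => v s i)
    (lam i * v t i ^ a - v t i * hebbianDrive lam a (v t)) t

namespace IsLoadingSolution

lemma continuousOn_apply (hv : IsLoadingSolution lam a v) (i : ι) :
    ContinuousOn (fun s => v s i) (Ici 0) := fun s hs =>
  (hv s hs i).continuousAt.continuousWithinAt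

lemma continuousOn_hebbianDrive (hv : IsLoadingSolution lam a v) :
    ContinuousOn (fun s => hebbianDrive lam a (v s)) (Ici 0) :=
  continuous_hebbianDrive.comp_continuousOn (continuousOn_pi.2 hv.continuousOn_apply)

lemma continuousOn_sum_sq (hv : IsLoadingSolution lam a v) :
    ContinuousOn (fun s => ∑ j, v s j ^ 2) (Ici 0) :=
  continuousOn_finsetSum _ fun j _ => (hv.continuousOn_apply j).pow 2

lemma hasDerivAt_sum_sq (hv : IsLoadingSolution lam a v) {t : ℝ} (ht : 0 ≤ t) :
    HasDerivAt (fun s => ∑ j, v s j ^ 2)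
      (2 * hebbianDrive lam a (v t) * (1 - ∑ j, v t j ^ 2)) t := by
  refine (HasDerivAt.fun_sum fun j _ => (hv t ht j).fun_pow 2).congr_deriv ?_
  set S := hebbianDrive lam a (v t)
  have hterm : ∀ j, ((2 : ℕ) : ℝ) * v t j ^ (2 - 1) * (lam j * v t j ^ a - v t j * S) =
      2 * (lam j * v t j ^ (a + 1)) - 2 * S * v t j ^ 2 := fun j => by push_cast; ring
  rw [Finset.sum_congr rfl fun j _ => hterm j, Finset.sum_sub_distrib, ← Finset.mul_sum,
    ← Finset.mul_sum]
  simp only [S, hebbianDrive]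
  ring

lemma apply_neg (hv : IsLoadingSolution lam a v) (ha : a ≠ 0) {i : ι} (h₀ : v 0 i < 0) :
    ∀ t ≥ 0, v t i < 0 := by
  refine neg_of_hasDerivAt_mul_self
    (g := fun s => lam i * v s i ^ (a - 1) - hebbianDrive lam a (v s))
    ((continuousOn_const.mul ((hv.continuousOn_apply i).pow (a - 1))).sub
      hv.continuousOn_hebbianDrive) (fun t ht => ?_) h₀
  convert hv t ht i using 1
  rw [sub_mul, mul_assoc, ← pow_succ, Nat.sub_add_cancel (Nat.one_le_iff_ne_zero.2 ha),
    mul_comm (v t i)]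

lemma sum_sq_lt_one (hv : IsLoadingSolution lam a v) (h₀ : ∑ j, v 0 j ^ 2 < 1) :
    ∀ t ≥ 0, ∑ j, v t j ^ 2 < 1 := by
  have := neg_of_hasDerivAt_mul_self (y := fun s => ∑ j, v s j ^ 2 - 1)
    (g := fun s => -2 * hebbianDrive lam a (v s))
    (continuousOn_const.mul hv.continuousOn_hebbianDrive)
    (fun t ht => ((hv.hasDerivAt_sum_sq ht).sub_const 1).congr_deriv (by ring)) (by linarith)
  exact fun t ht => sub_neg.1 (this t ht)

lemma antitoneOn_sum_sq (hv : IsLoadingSolution lam a v)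
    (hS : ∀ t ≥ 0, hebbianDrive lam a (v t) ≤ 0) (h₀ : ∑ j, v 0 j ^ 2 < 1) :
    AntitoneOn (fun s => ∑ j, v s j ^ 2) (Ici 0) := by
  refine antitoneOn_of_hasDerivWithinAt_nonpos (convex_Ici 0) hv.continuousOn_sum_sq
    (fun t ht => (hv.hasDerivAt_sum_sq (le_of_lt (by simpa using ht))).hasDerivWithinAt)
    fun t ht => ?_
  rw [interior_Ici] at ht
  exact mul_nonpos_of_nonpos_of_nonneg (by linarith [hS t ht.le])
    (sub_nonneg.2 (hv.sum_sq_lt_one h₀ t ht.le).le)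

lemma exists_sum_sq_lt (hv : IsLoadingSolution lam a v) (ha : Even a) (hlam : ∀ j, 0 < lam j)
    (hneg : ∀ t ≥ 0, v t ≤ 0) (h₀ : ∑ j, v 0 j ^ 2 < 1) {ε : ℝ} (hε : 0 < ε) :
    ∃ t ≥ 0, ∑ j, v t j ^ 2 < ε := by
  by_contra! hbig
  have hρ_anti := hv.antitoneOn_sum_sq
    (fun t ht => hebbianDrive_nonpos ha (fun j => (hlam j).le) (hneg t ht)) h₀
  obtain ⟨c, hc, hcS⟩ := exists_pos_forall_hebbianDrive_le (a := a) ha hlam (B := 1) hε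
  have hS : ∀ t ≥ 0, hebbianDrive lam a (v t) ≤ -c := fun t ht =>
    hcS _ (hneg t ht) (hbig t ht) (hv.sum_sq_lt_one h₀ t ht).le
  -- `ρ' = 2 S (1 - ρ) ≤ -2 c (1 - ρ 0) = -K`, so `ρ` would be negative at time `(ρ 0 + 1) / K`.
  set K := 2 * c * (1 - ∑ j, v 0 j ^ 2)
  have hK : 0 < K := mul_pos (by positivity) (by linarith)
  have hdecay := le_sub_mul_of_hasDerivAt_le_neg (K := K) (fun t ht => hv.hasDerivAt_sum_sq ht)
    (fun t ht => by
      have hρt : ∑ j, v t j ^ 2 ≤ ∑ j, v 0 j ^ 2 := hρ_anti self_mem_Ici ht.le ht.le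
      nlinarith [hS t ht.le, hv.sum_sq_lt_one h₀ t ht.le])
    (t := (∑ j, v 0 j ^ 2 + 1) / K) (by positivity)
  rw [mul_div_cancel₀ _ hK.ne'] at hdecay
  linarith [Finset.sum_nonneg fun j (_ : j ∈ Finset.univ) =>
    sq_nonneg (v ((∑ j, v 0 j ^ 2 + 1) / K) j)]

lemma tendsto_sum_sq_zero (hv : IsLoadingSolution lam a v) (ha : Even a)
    (hlam : ∀ j, 0 < lam j) (hneg : ∀ t ≥ 0, v t ≤ 0) (h₀ : ∑ j, v 0 j ^ 2 < 1) :
    Tendsto (fun t => ∑ j, v t j ^ 2) atTop (𝓝 0) := by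
  have hρ_anti := hv.antitoneOn_sum_sq
    (fun t ht => hebbianDrive_nonpos ha (fun j => (hlam j).le) (hneg t ht)) h₀
  refine Metric.tendsto_atTop.2 fun ε hε => ?_
  obtain ⟨T, hT, hTε⟩ := hv.exists_sum_sq_lt ha hlam hneg h₀ hε
  refine ⟨T, fun t ht => ?_⟩
  rw [Real.dist_eq, sub_zero, abs_of_nonneg (Finset.sum_nonneg fun j _ => sq_nonneg _)]
  exact (hρ_anti (mem_Ici.2 hT) (mem_Ici.2 (hT.trans ht)) ht).trans_lt hTε

end IsLoadingSolution

end LoadingDynamics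

theorem stmt2_general (R : ℕ) (a : ℕ) (ha : 2 ≤ a) (haeven : Even a)
    (lam : Fin R → ℝ) (hpos : ∀ i, 0 < lam i)
    (v : ℝ → Fin R → ℝ)
    (hode : ∀ t ≥ (0 : ℝ), ∀ i,
      HasDerivAt (fun s => v s i)
        (lam i * (v t i) ^ a - v t i * ∑ j, lam j * (v t j) ^ (a + 1)) t)
    (hball : ∑ j, (v 0 j) ^ 2 < 1)
    (hneg : ∀ k, v 0 k < 0) :
    Tendsto v atTop (𝓝 0) := by
  have hv : IsLoadingSolution lam a v := hode
  have hv_nonpos : ∀ t ≥ 0, v t ≤ 0 := fun t ht i =>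
    (hv.apply_neg (by omega) (hneg i) t ht).le
  exact tendsto_zero_of_tendsto_sum_sq (hv.tendsto_sum_sq_zero haeven hpos hv_nonpos hball)

/-- For even positive `a`, the origin attracts every solution of the nonlinear Hebbian
loading dynamics started inside the unit ball with all-negative loadings. -/
theorem stmt2 (R : ℕ) (hR : 1 ≤ R) (a : ℕ) (ha : 2 ≤ a) (haeven : Even a)
    (lam : Fin R → ℝ) (hpos : ∀ i, 0 < lam i)
    (v : ℝ → Fin R → ℝ)
    (hode : ∀ t ≥ (0 : ℝ), ∀ i,
      HasDerivAt (fun s => v s i)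
        (lam i * (v t i) ^ a - v t i * ∑ j, lam j * (v t j) ^ (a + 1)) t)
    (hball : ∑ j, (v 0 j) ^ 2 < 1)
    (hneg : ∀ k, v 0 k < 0) :
    Tendsto v atTop (𝓝 0) :=
  stmt2_general R a ha haeven lam hpos v hode hball hneg
end

section
/- Let K ≥ 1 and R ≥ 1 with R ≤ K, let U_1, …, U_R be an orthonormal family in the Euclidean space ℝ^K, let a ≥ 3 be an odd integer, and let λ_1, …, λ_R be positive reals. Suppose J : [0,∞) → ℝ^K is a solution of dJ/dt = G(J), where G(J) = ∑_{r=1}^R λ_r ⟨U_r, J⟩^a U_r − ( ∑_{r=1}^R λ_r ⟨U_r, J⟩^{a+1} ) J, and suppose ∑_{r=1}^R ⟨U_r, J(0)⟩^2 > 0. Then ‖J(t)‖ → 1 as t → ∞: the unit sphere is attracting for the synaptic weight dynamics. -/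
/-!
Write `x_r = ⟨U_r, J⟩` and `F(J) = ∑ λ_r x_r^{a+1}`, which is `≥ 0` since `a + 1` is even.
By orthonormality both `‖J‖²` and the loading `P = ∑ x_r²` obey the same scalar equation
`f' = 2F(J)(1 - f)`, hence `f(t) - 1 = (f(0) - 1) exp(-∫₀ᵗ 2F(J))`. For `P` this gives
`P ≥ min(P(0), 1) > 0`, and by Jensen `F(J) ≥ c P^{(a+1)/2}` is bounded below by a positive
constant; so the exponent diverges linearly and `‖J‖² → 1`.
-/

open Filter Topology Set Real RealInnerProductSpace

section Relaxation

variable {k f : ℝ → ℝ} {a : ℝ}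

theorem hasDerivWithinAt_integral_Ici (hk : ContinuousOn k (Ici a)) {t : ℝ} (ht : a ≤ t) :
    HasDerivWithinAt (fun u => ∫ s in a..u, k s) (k t) (Ici a) t := by
  have : Fact (t ∈ Icc a (t + 1)) := ⟨⟨ht, by linarith⟩⟩
  have hkI : ContinuousOn k (Icc a (t + 1)) := hk.mono Icc_subset_Ici_self
  have hderiv : HasDerivWithinAt (fun u => ∫ s in a..u, k s) (k t) (Icc a (t + 1)) t :=
    intervalIntegral.integral_hasDerivWithinAt_right
      (hk.mono (by rw [uIcc_of_le ht]; exact Icc_subset_Ici_self)).intervalIntegrable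
      (hkI.stronglyMeasurableAtFilter_nhdsWithin measurableSet_Icc t) (hkI t this.out)
  refine hderiv.mono_of_mem_nhdsWithin (mem_nhdsWithin.2 ⟨Iio (t + 1), isOpen_Iio, by simp, ?_⟩)
  exact fun x ⟨hx, hxa⟩ => ⟨hxa, hx.le⟩

theorem eq_one_add_mul_exp_neg_integral (hk : ContinuousOn k (Ici a))
    (hf : ∀ t ≥ a, HasDerivAt f (k t * (1 - f t)) t) {t : ℝ} (ht : a ≤ t) :
    f t = 1 + (f a - 1) * exp (-∫ s in a..t, k s) := by
  set I : ℝ → ℝ := fun u => ∫ s in a..u, k s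
  have hconst : ∀ u ≥ a, HasDerivWithinAt (fun u => (f u - 1) * exp (I u)) 0 (Ici a) u := by
    intro u hu
    have := ((hf u hu).hasDerivWithinAt.sub_const 1).mul
      ((hasDerivWithinAt_integral_Ici hk hu).exp)
    exact this.congr_deriv (by ring)
  have := constant_of_has_deriv_right_zero
    (fun u hu => (hconst u hu.1).continuousWithinAt.mono Icc_subset_Ici_self)
    (fun u hu => (hconst u hu.1).mono (Ici_subset_Ici.2 hu.1)) t ⟨ht, le_rfl⟩
  simp only [I, intervalIntegral.integral_same, exp_zero, mul_one] at this
  rw [exp_neg, ← this]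
  field_simp
  ring

theorem min_le_of_hasDerivAt_mul_one_sub (hk : ContinuousOn k (Ici a))
    (hk0 : ∀ t ≥ a, 0 ≤ k t) (hf : ∀ t ≥ a, HasDerivAt f (k t * (1 - f t)) t) {t : ℝ}
    (ht : a ≤ t) : min (f a) 1 ≤ f t := by
  have hI : 0 ≤ ∫ s in a..t, k s := intervalIntegral.integral_nonneg ht fun s hs => hk0 s hs.1
  have he : exp (-∫ s in a..t, k s) ≤ 1 := exp_le_one_iff.2 (neg_nonpos.2 hI)
  have he0 := exp_pos (-∫ s in a..t, k s)
  rw [eq_one_add_mul_exp_neg_integral hk hf ht]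
  rcases le_total (f a) 1 with h | h
  · exact (min_le_left _ _).trans (by nlinarith)
  · exact (min_le_right _ _).trans (by nlinarith)

theorem tendsto_one_of_hasDerivAt_mul_one_sub {σ : ℝ} (hk : ContinuousOn k (Ici a))
    (hσ : 0 < σ) (hkσ : ∀ t ≥ a, σ ≤ k t) (hf : ∀ t ≥ a, HasDerivAt f (k t * (1 - f t)) t) :
    Tendsto f atTop (𝓝 1) := by
  have hlin : ∀ t ≥ a, σ * (t - a) ≤ ∫ s in a..t, k s := by
    intro t ht
    have hk_int : IntervalIntegrable k MeasureTheory.volume a t :=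
      (hk.mono (by rw [uIcc_of_le ht]; exact Icc_subset_Ici_self)).intervalIntegrable
    simpa [mul_comm] using
      intervalIntegral.integral_mono_on ht intervalIntegrable_const hk_int fun s hs => hkσ s hs.1
  have hI : Tendsto (fun t => ∫ s in a..t, k s) atTop atTop :=
    tendsto_atTop_mono' _ (eventually_ge_atTop a |>.mono hlin)
      ((tendsto_atTop_add_const_right _ (-a) tendsto_id).const_mul_atTop hσ)
  have hdecay := (tendsto_const_nhds (x := (1 : ℝ))).add
    ((tendsto_exp_neg_atTop_nhds_zero.comp hI).const_mul (f a - 1))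
  rw [mul_zero, add_zero] at hdecay
  exact hdecay.congr' (eventually_ge_atTop a |>.mono fun t ht =>
    (eq_one_add_mul_exp_neg_integral hk hf ht).symm)

end Relaxation

section Hebbian

variable {E ι : Type*} [NormedAddCommGroup E] [InnerProductSpace ℝ E] [Fintype ι]
  (U : ι → E) (lam : ι → ℝ) (a : ℕ)

/-- `μ(x, …, x)` for the odeco tensor `μ = ∑ r, λ_r U_r^{⊗(a+1)}`. -/
def odecoForm (x : E) : ℝ := ∑ r, lam r * ⟪U r, x⟫ ^ (a + 1)

/-- The right-hand side `G` of the dynamics `dJ/dt = G(J)`. -/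
def hebbianField (x : E) : E := ∑ r, (lam r * ⟪U r, x⟫ ^ a) • U r - odecoForm U lam a x • x

theorem continuous_odecoForm : Continuous (odecoForm U lam a) := by
  unfold odecoForm
  fun_prop

theorem odecoForm_nonneg {lam : ι → ℝ} (hlam : ∀ r, 0 ≤ lam r) {a : ℕ} (ha : Odd a) (x : E) :
    0 ≤ odecoForm U lam a x :=
  Finset.sum_nonneg fun r _ => mul_nonneg (hlam r) (ha.add_one.pow_nonneg _)

theorem exists_pos_mul_pow_le_odecoForm [Nonempty ι] {lam : ι → ℝ} (hlam : ∀ r, 0 < lam r)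
    (k : ℕ) : ∃ c > 0, ∀ x, c * (∑ r, ⟪U r, x⟫ ^ 2) ^ (k + 1) ≤ odecoForm U lam (2 * k + 1) x := by
  obtain ⟨r₀, -, hr₀⟩ := Finset.exists_min_image Finset.univ lam Finset.univ_nonempty
  refine ⟨lam r₀ / Fintype.card ι ^ k, div_pos (hlam r₀) (by positivity), fun x => ?_⟩
  have hjensen := pow_sum_div_card_le_sum_pow (s := Finset.univ)
    (f := fun r => ⟪U r, x⟫ ^ 2) (fun r _ => sq_nonneg _) k
  calc lam r₀ / Fintype.card ι ^ k * (∑ r, ⟪U r, x⟫ ^ 2) ^ (k + 1)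
      = lam r₀ * ((∑ r, ⟪U r, x⟫ ^ 2) ^ (k + 1) / Fintype.card ι ^ k) := by ring
    _ ≤ lam r₀ * ∑ r, (⟪U r, x⟫ ^ 2) ^ (k + 1) := by
      gcongr
      · exact (hlam r₀).le
      · simpa using hjensen
    _ ≤ odecoForm U lam (2 * k + 1) x := by
      rw [Finset.mul_sum]
      refine Finset.sum_le_sum fun r _ => ?_
      rw [← pow_mul]
      exact mul_le_mul_of_nonneg_right (hr₀ r (Finset.mem_univ r)) ((even_two_mul _).pow_nonneg _)

theorem inner_self_hebbianField (x : E) :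
    ⟪x, hebbianField U lam a x⟫ = odecoForm U lam a x * (1 - ‖x‖ ^ 2) := by
  simp only [hebbianField, odecoForm, inner_sub_right, inner_sum, real_inner_smul_right,
    real_inner_self_eq_norm_sq, real_inner_comm x, pow_succ]
  ring_nf

variable {U} in
theorem inner_hebbianField (hU : Orthonormal ℝ U) (r : ι) (x : E) :
    ⟪U r, hebbianField U lam a x⟫ = lam r * ⟪U r, x⟫ ^ a - odecoForm U lam a x * ⟪U r, x⟫ := by
  rw [hebbianField, inner_sub_right, hU.inner_right_fintype, real_inner_smul_right]

variable {U} in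
theorem sum_inner_mul_inner_hebbianField (hU : Orthonormal ℝ U) (x : E) :
    ∑ r, ⟪U r, x⟫ * ⟪U r, hebbianField U lam a x⟫ =
      odecoForm U lam a x * (1 - ∑ r, ⟪U r, x⟫ ^ 2) := by
  simp only [inner_hebbianField lam a hU, odecoForm, mul_sub, mul_one, Finset.sum_sub_distrib,
    Finset.mul_sum]
  congr 1 <;> refine Finset.sum_congr rfl fun r _ => by ring

variable {J : ℝ → E} {t : ℝ}

theorem hasDerivAt_norm_sq_of_hebbianField (hJ : HasDerivAt J (hebbianField U lam a (J t)) t) :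
    HasDerivAt (fun t => ‖J t‖ ^ 2) (2 * odecoForm U lam a (J t) * (1 - ‖J t‖ ^ 2)) t := by
  convert hJ.norm_sq using 1
  rw [inner_self_hebbianField, mul_assoc]

variable {U} in
theorem hasDerivAt_sum_inner_sq_of_hebbianField (hU : Orthonormal ℝ U)
    (hJ : HasDerivAt J (hebbianField U lam a (J t)) t) :
    HasDerivAt (fun t => ∑ r, ⟪U r, J t⟫ ^ 2)
      (2 * odecoForm U lam a (J t) * (1 - ∑ r, ⟪U r, J t⟫ ^ 2)) t := by
  have := HasDerivAt.fun_sum (u := Finset.univ) fun r _ =>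
    ((hasDerivAt_const t (U r)).inner ℝ hJ).fun_pow 2
  refine this.congr_deriv ?_
  simp only [inner_zero_left, add_zero, Nat.cast_ofNat, Nat.add_one_sub_one, pow_one, mul_assoc,
    ← Finset.mul_sum, sum_inner_mul_inner_hebbianField lam a hU]

end Hebbian

theorem stmt9_general (K R : ℕ) (hR : 1 ≤ R)
    (U : Fin R → EuclideanSpace ℝ (Fin K)) (hU : Orthonormal ℝ U)
    (a : ℕ) (haodd : Odd a)
    (lam : Fin R → ℝ) (hpos : ∀ i, 0 < lam i)
    (J : ℝ → EuclideanSpace ℝ (Fin K))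
    (hode : ∀ t ≥ (0 : ℝ), HasDerivAt J
      ((∑ r, (lam r * (inner ℝ (U r) (J t) : ℝ) ^ a) • U r)
        - (∑ r, lam r * (inner ℝ (U r) (J t) : ℝ) ^ (a + 1)) • J t) t)
    (h0 : 0 < ∑ r, (inner ℝ (U r) (J 0) : ℝ) ^ 2) :
    Tendsto (fun t => ‖J t‖) atTop (𝓝 1) := by
  have : Nonempty (Fin R) := ⟨⟨0, hR⟩⟩
  set P : ℝ → ℝ := fun t => ∑ r, ⟪U r, J t⟫ ^ 2
  have hF : ContinuousOn (fun t => 2 * odecoForm U lam a (J t)) (Ici 0) :=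
    continuousOn_const.mul <| (continuous_odecoForm U lam a).comp_continuousOn
      fun t ht => (hode t ht).continuousAt.continuousWithinAt
  have hF0 : ∀ t ≥ (0 : ℝ), 0 ≤ 2 * odecoForm U lam a (J t) := fun t _ =>
    mul_nonneg zero_le_two (odecoForm_nonneg U (fun r => (hpos r).le) haodd _)
  have hP : ∀ t ≥ (0 : ℝ), min (P 0) 1 ≤ P t := fun t ht =>
    min_le_of_hasDerivAt_mul_one_sub hF hF0
      (fun s hs => hasDerivAt_sum_inner_sq_of_hebbianField lam a hU (hode s hs)) ht
  obtain ⟨k, rfl⟩ := haodd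
  obtain ⟨c, hc, hcF⟩ := exists_pos_mul_pow_le_odecoForm U hpos k
  have hFσ : ∀ t ≥ (0 : ℝ), 2 * (c * min (P 0) 1 ^ (k + 1)) ≤ 2 * odecoForm U lam _ (J t) :=
    fun t ht => by gcongr; exact (hcF (J t)).trans' (by gcongr; exact hP t ht)
  have hnorm : Tendsto (fun t => ‖J t‖ ^ 2) atTop (𝓝 1) :=
    tendsto_one_of_hasDerivAt_mul_one_sub hF (by have := lt_min h0 one_pos; positivity) hFσ
      fun t ht => hasDerivAt_norm_sq_of_hebbianField U lam _ (hode t ht)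
  simpa using hnorm.sqrt

/-- For odd `a > 1` and positive eigenvalues, the unit sphere attracts every
solution of the odeco mean-field Hebbian dynamics with nonzero initial loading. -/
theorem stmt9 (K R : ℕ) (hK : 1 ≤ K) (hR : 1 ≤ R) (hRK : R ≤ K)
    (U : Fin R → EuclideanSpace ℝ (Fin K)) (hU : Orthonormal ℝ U)
    (a : ℕ) (ha : 3 ≤ a) (haodd : Odd a)
    (lam : Fin R → ℝ) (hpos : ∀ i, 0 < lam i)
    (J : ℝ → EuclideanSpace ℝ (Fin K))
    (hode : ∀ t ≥ (0 : ℝ), HasDerivAt J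
      ((∑ r, (lam r * (inner ℝ (U r) (J t) : ℝ) ^ a) • U r)
        - (∑ r, lam r * (inner ℝ (U r) (J t) : ℝ) ^ (a + 1)) • J t) t)
    (h0 : 0 < ∑ r, (inner ℝ (U r) (J 0) : ℝ) ^ 2) :
    Tendsto (fun t => ‖J t‖) atTop (𝓝 1) :=
  stmt9_general K R hR U hU a haodd lam hpos J hode h0
end

section
/- Let R ≥ 1, N ≥ 1, let a_1, …, a_N ≥ 2 be integers, and let λ_{m i} ≥ 0 be reals, and fix k ∈ {1,…,R}. Let L(v) = ∑_{m=1}^N ∑_{j=1}^R λ_{m j} v_j^{a_m+1} and G(v)_i = ∑_{m=1}^N λ_{m i} v_i^{a_m} − v_i L(v). Then −e_k is an equilibrium of G, G is differentiable at −e_k, and its derivative at −e_k is the diagonal linear map with entry 2 ∑_{m=1}^N λ_{m k} (−1)^{a_m} in the k-th diagonal position and entry ∑_{m=1}^N λ_{m k} (−1)^{a_m} in every other diagonal position. Consequently, if ∑_{m=1}^N λ_{m k} (−1)^{a_m} < 0 then all eigenvalues of the derivative are negative (−e_k is linearly stable), and if ∑_{m=1}^N λ_{m k} (−1)^{a_m}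 > 0 then the derivative has a positive eigenvalue (−e_k is linearly unstable). -/
/-!
At `-e_k` every sum over coordinates collapses to its `k`-th term, since all exponents are
positive; hence `L(-e_k) = -s` with `s = ∑ₘ λₘₖ (-1)^{aₘ}`, and `G(-e_k) = 0`. Differentiating
`Gᵢ(v) = ∑ₘ λₘᵢ vᵢ^{aₘ} - vᵢ L(v)`: for `i ≠ k` only `-L(-e_k) = s` survives (this needs
`aₘ ≥ 2`), while for `i = k` the three contributions `-∑ₘ λₘₖ aₘ (-1)^{aₘ}`,
`∑ₘ λₘₖ (aₘ + 1) (-1)^{aₘ}` and `s` add up to `2s`.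
-/

section LoadingField

variable {ι μ : Type*} [Fintype ι] [Fintype μ] (lam : μ → ι → ℝ) (a : μ → ℕ)

def outputPower (v : ι → ℝ) : ℝ := ∑ m, ∑ j, lam m j * v j ^ (a m + 1)

def loadingField (v : ι → ℝ) (i : ι) : ℝ :=
  ∑ m, lam m i * v i ^ a m - v i * outputPower lam a v

def signedLoad (k : ι) : ℝ := ∑ m, lam m k * (-1 : ℝ) ^ a m

local notation "π" => ContinuousLinearMap.proj (R := ℝ) (φ := fun _ : ι => ℝ)

theorem hasFDerivAt_outputPower (v : ι → ℝ) :
    HasFDerivAt (outputPower lam a) (∑ m, ∑ j, lam m j • ((a m + 1) • v j ^ a m) • π j) v :=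
  HasFDerivAt.fun_sum fun m _ => HasFDerivAt.fun_sum fun j _ =>
    ((hasFDerivAt_apply j v).pow (a m + 1)).const_mul (lam m j)

theorem hasFDerivAt_loadingField_apply {L' : (ι → ℝ) →L[ℝ] ℝ} {v : ι → ℝ}
    (hL : HasFDerivAt (outputPower lam a) L' v) (i : ι) :
    HasFDerivAt (fun v => loadingField lam a v i)
      (∑ m, lam m i • (a m • v i ^ (a m - 1)) • π i -
        (v i • L' + outputPower lam a v • π i)) v :=
  (HasFDerivAt.fun_sum fun m _ => ((hasFDerivAt_apply i v).pow (a m)).const_mul (lam m i)).sub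
    ((hasFDerivAt_apply i v).mul hL)

variable [DecidableEq ι]

theorem sum_apply_neg_single {M : Type*} [AddCommMonoid M] {f : ι → ℝ → M}
    (hf : ∀ j, f j 0 = 0) (k : ι) :
    ∑ j, f j ((-Pi.single k 1 : ι → ℝ) j) = f k (-1) := by
  rw [Fintype.sum_eq_single k fun j hj => by simp [hj, hf]]
  simp

theorem outputPower_neg_single (k : ι) :
    outputPower lam a (-Pi.single k 1) = -signedLoad lam a k := by
  simp only [outputPower, signedLoad, ← Finset.sum_neg_distrib]
  refine Finset.sum_congr rfl fun m _ => ?_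
  rw [sum_apply_neg_single (f := fun j x => lam m j * x ^ (a m + 1)) (by simp)]
  ring

theorem loadingField_neg_single (ha : ∀ m, a m ≠ 0) (k : ι) :
    loadingField lam a (-Pi.single k 1) = 0 := by
  funext i
  rw [loadingField, outputPower_neg_single, signedLoad]
  by_cases hik : i = k
  · subst hik
    simp
  · simp [hik, ha]

theorem hasFDerivAt_outputPower_neg_single (ha : ∀ m, a m ≠ 0) (k : ι) :
    HasFDerivAt (outputPower lam a)
      ((∑ m, lam m k * (a m + 1) * (-1) ^ a m) • π k) (-Pi.single k 1) := by
  refine (hasFDerivAt_outputPower lam a _).congr_fderiv ?_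
  rw [Finset.sum_smul]
  refine Finset.sum_congr rfl fun m _ => ?_
  rw [sum_apply_neg_single (f := fun j x => lam m j • ((a m + 1) • x ^ a m) • π j)
    (by simp [ha])]
  simp only [smul_smul, nsmul_eq_mul, Nat.cast_add, Nat.cast_one, mul_assoc]

theorem hasFDerivAt_loadingField_neg_single (ha : ∀ m, 2 ≤ a m) (k : ι) :
    HasFDerivAt (loadingField lam a)
      (ContinuousLinearMap.pi fun i =>
        (if i = k then 2 * signedLoad lam a k else signedLoad lam a k) • π i)
      (-Pi.single k 1) := by
  have hL := hasFDerivAt_outputPower_neg_single lam a (fun m => Nat.ne_zero_of_lt (ha m)) k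
  refine hasFDerivAt_pi'' fun i =>
    (hasFDerivAt_loadingField_apply lam a hL i).congr_fderiv ?_
  ext w
  by_cases hik : i = k
  · subst hik
    have hpred : ∀ m, (-1 : ℝ) ^ (a m - 1) = -(-1) ^ a m := fun m => by
      rw [← pow_sub_one_mul (Nat.ne_zero_of_lt (ha m))]
      ring
    simp only [Pi.neg_apply, Pi.single_eq_same, hpred, smul_neg, nsmul_eq_mul,
      outputPower_neg_single, signedLoad, ← Finset.sum_neg_distrib, sub_apply, sum_apply,
      smul_apply, ContinuousLinearMap.proj_apply, smul_eq_mul, neg_mul, mul_neg, add_apply,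
      Finset.sum_mul, Finset.mul_sum, one_mul,
      ← Finset.sum_add_distrib, ← Finset.sum_sub_distrib, ite_smul,
      ContinuousLinearMap.proj_pi, ↓reduceIte]
    exact Finset.sum_congr rfl fun m _ => by ring
  · have hzero : ∀ m, (0 : ℝ) ^ (a m - 1) = 0 := fun m =>
      zero_pow (Nat.sub_ne_zero_of_lt (ha m))
    simp [outputPower_neg_single, hik, hzero]

end LoadingField

theorem stmt12_general (R N : ℕ)
    (a : Fin N → ℕ) (ha : ∀ m, 2 ≤ a m)
    (lam : Fin N → Fin R → ℝ)
    (k : Fin R)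
    (G : (Fin R → ℝ) → (Fin R → ℝ))
    (hG : G = fun v i => (∑ m, lam m i * (v i) ^ (a m))
        - v i * ∑ m, ∑ j, lam m j * (v j) ^ (a m + 1)) :
    G (-Pi.single k 1) = 0 ∧
    HasFDerivAt (𝕜 := ℝ) G
      (ContinuousLinearMap.pi fun i =>
        (if i = k then 2 * ∑ m, lam m k * (-1 : ℝ) ^ (a m)
          else ∑ m, lam m k * (-1 : ℝ) ^ (a m)) • ContinuousLinearMap.proj i)
      (-Pi.single k 1) ∧
    ((∑ m, lam m k * (-1 : ℝ) ^ (a m) < 0 →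
      ∀ i : Fin R, (if i = k then 2 * ∑ m, lam m k * (-1 : ℝ) ^ (a m)
        else ∑ m, lam m k * (-1 : ℝ) ^ (a m)) < 0) ∧
     (0 < ∑ m, lam m k * (-1 : ℝ) ^ (a m) →
      ∃ i : Fin R, 0 < (if i = k then 2 * ∑ m, lam m k * (-1 : ℝ) ^ (a m)
        else ∑ m, lam m k * (-1 : ℝ) ^ (a m)))) := by
  subst hG
  refine ⟨loadingField_neg_single lam a (fun m => Nat.ne_zero_of_lt (ha m)) k,
    hasFDerivAt_loadingField_neg_single lam a ha k, fun hs i => ?_, fun hs => ⟨k, ?_⟩⟩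
  · split_ifs <;> linarith
  · rw [if_pos rfl]
    linarith

/-- `-e_k` is an equilibrium of the multi-term loading vector field `G`, with diagonal
derivative whose entries are `2 ∑ₘ λ_{mk} (-1)^{aₘ}` at position `k` and
`∑ₘ λ_{mk} (-1)^{aₘ}` elsewhere; it is linearly stable iff that sum is negative. -/
theorem stmt12 (R N : ℕ) (hR : 1 ≤ R) (hN : 1 ≤ N)
    (a : Fin N → ℕ) (ha : ∀ m, 2 ≤ a m)
    (lam : Fin N → Fin R → ℝ) (hnn : ∀ m i, 0 ≤ lam m i)
    (k : Fin R)
    (G : (Fin R → ℝ) → (Fin R → ℝ))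
    (hG : G = fun v i => (∑ m, lam m i * (v i) ^ (a m))
        - v i * ∑ m, ∑ j, lam m j * (v j) ^ (a m + 1)) :
    G (-Pi.single k 1) = 0 ∧
    HasFDerivAt (𝕜 := ℝ) G
      (ContinuousLinearMap.pi fun i =>
        (if i = k then 2 * ∑ m, lam m k * (-1 : ℝ) ^ (a m)
          else ∑ m, lam m k * (-1 : ℝ) ^ (a m)) • ContinuousLinearMap.proj i)
      (-Pi.single k 1) ∧
    ((∑ m, lam m k * (-1 : ℝ) ^ (a m) < 0 →
      ∀ i : Fin R, (if i = k then 2 * ∑ m, lam m k * (-1 : ℝ) ^ (a m)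
        else ∑ m, lam m k * (-1 : ℝ) ^ (a m)) < 0) ∧
     (0 < ∑ m, lam m k * (-1 : ℝ) ^ (a m) →
      ∃ i : Fin R, 0 < (if i = k then 2 * ∑ m, lam m k * (-1 : ℝ) ^ (a m)
        else ∑ m, lam m k * (-1 : ℝ) ^ (a m)))) :=
  stmt12_general R N a ha lam k G hG
end
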